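/- Suppose the equation x(k+1) = A(k)x(k) has an exponential dichotomy on ℤ₊ with projection P(k). Then: (a) the stable subspace R(P(0)) is uniquely determined, i.e. if the equation also has an exponential dichotomy on ℤ₊ with projection Q(k), then R(Q(0)) = R(P(0)); (b) for every subspace W of ℝⁿ with W ⊕ R(P(0)) = ℝⁿ there exists a unique projection family Q(k), k ∈ ℤ₊, satisfying the invariance Q(k+1)A(k) = A(k)Q(k), such that N(Q(0)) = W and the equation has an exponential dichotomy on ℤ₊ with projection Q(k) (for some constants); moreover this Q(k) satisfies R(Q(k)) = R(P(k)) for all k ≥ 0. -/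

import Mathlib

noncomputable section

open scoped BigOperators

/-- ℝⁿ as a Euclidean space. -/
abbrev Euc (n : ℕ) := EuclideanSpace ℝ (Fin n)

/-- The transition matrix `Φ(k,m) = A(k-1) ⋯ A(m)`, with `Φ(m,m) = 1`
(and `Φ(k,m) = 1` when `k ≤ m`). -/
def Phi {n : ℕ} (A : ℤ → (Euc n →L[ℝ] Euc n)) (k m : ℤ) : Euc n →L[ℝ] Euc n :=
  (((List.range (k - m).toNat).map fun i => A (m + i)).reverse).prod

/-- `J` is an interval of integers. -/
def IsIntInterval (J : Set ℤ) : Prop :=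
  ∀ ⦃a b c : ℤ⦄, a ∈ J → b ∈ J → a ≤ c → c ≤ b → c ∈ J

/-- The equation `x(k+1) = A(k) x(k)` has an exponential dichotomy on `J` with
projection family `P`, constant `K` and exponent `α`. -/
structure ExpDichotomyOn {n : ℕ} (A : ℤ → (Euc n →L[ℝ] Euc n)) (J : Set ℤ)
    (P : ℤ → (Euc n →L[ℝ] Euc n)) (K α : ℝ) : Prop where
  one_le_K : 1 ≤ K
  alpha_pos : 0 < α
  proj : ∀ k ∈ J, P k ∘L P k = P k
  rank_const : ∀ k ∈ J, ∀ m ∈ J,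
    Module.finrank ℝ (LinearMap.range (P k : Euc n →ₗ[ℝ] Euc n)) = Module.finrank ℝ (LinearMap.range (P m : Euc n →ₗ[ℝ] Euc n))
  invariance : ∀ m ∈ J, ∀ k ∈ J, m ≤ k → Phi A k m ∘L P m = P k ∘L Phi A k m
  forward : ∀ m ∈ J, ∀ k ∈ J, m ≤ k →
    ‖Phi A k m ∘L P m‖ ≤ K * Real.exp (-α * ((k : ℝ) - (m : ℝ)))
  bijOn : ∀ k : ℤ, k ∈ J → k + 1 ∈ J →
    Set.BijOn (A k) (LinearMap.ker (P k : Euc n →ₗ[ℝ] Euc n) : Set (Euc n)) (LinearMap.ker (P (k + 1) : Euc n →ₗ[ℝ] Euc n) : Set (Euc n))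
  backward : ∃ Ψ : ℤ → ℤ → (Euc n →L[ℝ] Euc n), ∀ m ∈ J, ∀ k ∈ J, m ≤ k →
    (∀ x ∈ LinearMap.ker (P m : Euc n →ₗ[ℝ] Euc n), Ψ m k (Phi A k m x) = x) ∧
    (∀ x ∈ LinearMap.ker (P k : Euc n →ₗ[ℝ] Euc n), Ψ m k x ∈ LinearMap.ker (P m : Euc n →ₗ[ℝ] Euc n) ∧ Phi A k m (Ψ m k x) = x) ∧
    ‖Ψ m k ∘L (1 - P k)‖ ≤ K * Real.exp (-α * ((k : ℝ) - (m : ℝ)))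

/-!
The stable subspace `R(P m)` is intrinsic: it is the set of initial values at time `m` whose
forward orbit is bounded. Indeed the forward estimate bounds the orbit of `x = P m x`, while for a
bounded orbit the backward estimate gives `‖(1 - P m) x‖ ≤ K C e^{-α(k-m)}` for every `k ≥ m`.
Since `A k` maps `N(Q k)` onto `N(Q (k+1))`, all kernels are determined by `N(Q 0)`, and a
projection is determined by its range and kernel; this gives uniqueness.

For existence let `Q₀` be the projection onto `R(P 0)` along `W` and `D = Q₀ - P 0`, which maps
into `R(P 0)` and vanishes on it. Transporting `D` along the solutions,
`E k = Φ(k,0) D Φ(0,k) (1 - P k)` is invariant and uniformly bounded, maps into `R(P k)` and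
vanishes on it, so `Q k = P k + E k` is an invariant projection onto `R(P k)` with `Q 0 = Q₀`;
its dichotomy estimates follow from those of `P` with the constant `K (1 + K + sup ‖E k‖)`.
-/

open Filter Topology

section Transition

variable {n : ℕ} (A : ℤ → (Euc n →L[ℝ] Euc n))

theorem Phi_self (m : ℤ) : Phi A m m = 1 := by
  simp [Phi]

theorem Phi_succ {k m : ℤ} (h : m ≤ k) : Phi A (k + 1) m = A k ∘L Phi A k m := by
  have h1 : (k + 1 - m).toNat = (k - m).toNat + 1 := by omega
  have h2 : m + ((k - m) ⊔ 0) = k := by omega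
  simp [Phi, h1, h2, List.range_succ, ContinuousLinearMap.mul_def]

theorem Phi_succ_self (k : ℤ) : Phi A (k + 1) k = A k := by
  rw [Phi_succ A le_rfl, Phi_self, ContinuousLinearMap.one_def, ContinuousLinearMap.comp_id]

theorem Phi_comp {k m l : ℤ} (hlm : l ≤ m) (hmk : m ≤ k) :
    Phi A k m ∘L Phi A m l = Phi A k l := by
  induction k, hmk using Int.leInduction with
  | base => rw [Phi_self, ContinuousLinearMap.one_def, ContinuousLinearMap.id_comp]
  | succ k hmk ih =>
    rw [Phi_succ A hmk, Phi_succ A (hlm.trans hmk), ContinuousLinearMap.comp_assoc, ih]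

theorem Phi_comp_apply {k m l : ℤ} (hlm : l ≤ m) (hmk : m ≤ k) (x : Euc n) :
    Phi A k m (Phi A m l x) = Phi A k l x :=
  DFunLike.congr_fun (Phi_comp A hlm hmk) x

end Transition

theorem exp_neg_mul_sub_le_one {α : ℝ} (hα : 0 ≤ α) {m k : ℤ} (hmk : m ≤ k) :
    Real.exp (-α * ((k : ℝ) - m)) ≤ 1 :=
  Real.exp_le_one_iff.mpr <|
    mul_nonpos_of_nonpos_of_nonneg (neg_nonpos.mpr hα) (sub_nonneg.mpr (Int.cast_le.mpr hmk))

theorem nonpos_of_forall_le_mul_exp {a c α : ℝ} (hα : 0 < α)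
    (h : ∀ j : ℕ, a ≤ c * Real.exp (-α * j)) : a ≤ 0 := by
  have hlim : Tendsto (fun j : ℕ => c * Real.exp (-α * j)) atTop (𝓝 0) := by
    have := (Real.tendsto_exp_neg_atTop_nhds_zero.comp
      (tendsto_natCast_atTop_atTop.const_mul_atTop hα)).const_mul c
    simpa [Function.comp_def, neg_mul] using this
  exact ge_of_tendsto' hlim h

namespace ExpDichotomyOn

variable {n : ℕ} {A P Q : ℤ → (Euc n →L[ℝ] Euc n)} {J : Set ℤ} {K α K' α' : ℝ}

theorem K_nonneg (h : ExpDichotomyOn A J P K α) : 0 ≤ K :=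
  zero_le_one.trans h.one_le_K

theorem proj_apply (h : ExpDichotomyOn A J P K α) {k : ℤ} (hk : k ∈ J) (x : Euc n) :
    P k (P k x) = P k x :=
  DFunLike.congr_fun (h.proj k hk) x

theorem isIdempotentElem (h : ExpDichotomyOn A J P K α) {k : ℤ} (hk : k ∈ J) :
    IsIdempotentElem (P k : Euc n →ₗ[ℝ] Euc n) :=
  LinearMap.ext (h.proj_apply hk)

theorem one_sub_apply_mem_ker (h : ExpDichotomyOn A J P K α) {k : ℤ} (hk : k ∈ J) (x : Euc n) :
    (1 - P k) x ∈ LinearMap.ker (P k : Euc n →ₗ[ℝ] Euc n) := by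
  simp [h.proj_apply hk]

theorem invariance_apply (h : ExpDichotomyOn A J P K α) {m k : ℤ} (hm : m ∈ J) (hk : k ∈ J)
    (hmk : m ≤ k) (x : Euc n) : Phi A k m (P m x) = P k (Phi A k m x) :=
  DFunLike.congr_fun (h.invariance m hm k hk hmk) x

theorem invariance_one_sub_apply (h : ExpDichotomyOn A J P K α) {m k : ℤ} (hm : m ∈ J)
    (hk : k ∈ J) (hmk : m ≤ k) (x : Euc n) :
    Phi A k m ((1 - P m) x) = (1 - P k) (Phi A k m x) := by
  simp [h.invariance_apply hm hk hmk]

theorem proj_succ_comp (h : ExpDichotomyOn A J P K α) {k : ℤ} (hk : k ∈ J) (hk1 : k + 1 ∈ J) :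
    P (k + 1) ∘L A k = A k ∘L P k := by
  simpa only [Phi_succ_self] using (h.invariance k hk (k + 1) hk1 (Int.le_add_one le_rfl)).symm

theorem norm_forward_le (h : ExpDichotomyOn A J P K α) {m k : ℤ} (hm : m ∈ J) (hk : k ∈ J)
    (hmk : m ≤ k) : ‖Phi A k m ∘L P m‖ ≤ K :=
  (h.forward m hm k hk hmk).trans <|
    mul_le_of_le_one_right h.K_nonneg (exp_neg_mul_sub_le_one h.alpha_pos.le hmk)

theorem norm_proj_le (h : ExpDichotomyOn A J P K α) {k : ℤ} (hk : k ∈ J) : ‖P k‖ ≤ K := by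
  simpa [Phi_self, ContinuousLinearMap.one_def] using h.norm_forward_le hk hk le_rfl

theorem mem_range_iff_bounded (h : ExpDichotomyOn A J P K α) {m : ℤ} (hJ : ∀ k, m ≤ k → k ∈ J)
    (x : Euc n) :
    x ∈ LinearMap.range (P m : Euc n →ₗ[ℝ] Euc n) ↔ ∃ C, ∀ k, m ≤ k → ‖Phi A k m x‖ ≤ C := by
  have hm := hJ m le_rfl
  constructor
  · rintro ⟨y, rfl⟩
    refine ⟨K * ‖y‖, fun k hmk => ?_⟩
    calc ‖Phi A k m (P m y)‖ = ‖(Phi A k m ∘L P m) y‖ := rfl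
      _ ≤ ‖Phi A k m ∘L P m‖ * ‖y‖ := ContinuousLinearMap.le_opNorm _ _
      _ ≤ K * ‖y‖ := by gcongr; exact h.norm_forward_le hm (hJ k hmk) hmk
  · rintro ⟨C, hC⟩
    obtain ⟨Ψ, hΨ⟩ := h.backward
    have hdecay : ∀ k, m ≤ k → ‖(1 - P m) x‖ ≤ K * C * Real.exp (-α * ((k : ℝ) - m)) := by
      intro k hmk
      obtain ⟨hleft, -, hnorm⟩ := hΨ m hm k (hJ k hmk) hmk
      have hx : (1 - P m) x = (Ψ m k ∘L (1 - P k)) (Phi A k m x) := by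
        rw [ContinuousLinearMap.comp_apply, ← h.invariance_one_sub_apply hm (hJ k hmk) hmk,
          hleft _ (h.one_sub_apply_mem_ker hm x)]
      calc ‖(1 - P m) x‖ ≤ ‖Ψ m k ∘L (1 - P k)‖ * ‖Phi A k m x‖ :=
            hx ▸ ContinuousLinearMap.le_opNorm _ _
        _ ≤ K * Real.exp (-α * ((k : ℝ) - m)) * C :=
            mul_le_mul hnorm (hC k hmk) (norm_nonneg _) (by positivity [h.K_nonneg])
        _ = K * C * Real.exp (-α * ((k : ℝ) - m)) := by ring
    have hzero : (1 - P m) x = 0 :=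
      norm_le_zero_iff.mp <| nonpos_of_forall_le_mul_exp h.alpha_pos fun j => by
        simpa using hdecay (m + j) (by omega)
    exact ⟨x, (sub_eq_zero.mp (by simpa using hzero)).symm⟩

theorem range_eq (hP : ExpDichotomyOn A J P K α) (hQ : ExpDichotomyOn A J Q K' α') {m : ℤ}
    (hJ : ∀ k, m ≤ k → k ∈ J) :
    LinearMap.range (P m : Euc n →ₗ[ℝ] Euc n) = LinearMap.range (Q m : Euc n →ₗ[ℝ] Euc n) := by
  ext x
  rw [hP.mem_range_iff_bounded hJ, hQ.mem_range_iff_bounded hJ]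

theorem ker_succ (h : ExpDichotomyOn A J P K α) {k : ℤ} (hk : k ∈ J) (hk1 : k + 1 ∈ J) :
    LinearMap.ker (P (k + 1) : Euc n →ₗ[ℝ] Euc n) =
      (LinearMap.ker (P k : Euc n →ₗ[ℝ] Euc n)).map (A k : Euc n →ₗ[ℝ] Euc n) :=
  SetLike.coe_injective ((Submodule.map_coe _ _).trans (h.bijOn k hk hk1).image_eq).symm

theorem eq_of_ker_eq {a : ℤ} (hP : ExpDichotomyOn A (Set.Ici a) P K α)
    (hQ : ExpDichotomyOn A (Set.Ici a) Q K' α')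
    (hker : LinearMap.ker (P a : Euc n →ₗ[ℝ] Euc n) = LinearMap.ker (Q a : Euc n →ₗ[ℝ] Euc n))
    {k : ℤ} (hk : a ≤ k) : P k = Q k := by
  have hker_k : LinearMap.ker (P k : Euc n →ₗ[ℝ] Euc n) = LinearMap.ker (Q k : Euc n →ₗ[ℝ] Euc n) := by
    induction k, hk using Int.leInduction with
    | base => exact hker
    | succ k hk ih =>
      have hk1 : a ≤ k + 1 := Int.le_add_one hk
      rw [hP.ker_succ hk hk1, hQ.ker_succ hk hk1, ih]
  exact ContinuousLinearMap.coe_injective <|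
    LinearMap.IsIdempotentElem.ext (hP.isIdempotentElem hk) (hQ.isIdempotentElem hk)
    ⟨hP.range_eq hQ fun _ hj => hk.trans hj, hker_k⟩

end ExpDichotomyOn

/-- Adding such an `E` to `P` keeps the stable subspaces and tilts the unstable ones. -/
structure IsDichotomyCorrection {n : ℕ} (A P E : ℤ → (Euc n →L[ℝ] Euc n)) (J : Set ℤ) (C : ℝ) :
    Prop where
  proj_comp : ∀ k ∈ J, P k ∘L E k = E k
  comp_proj : ∀ k ∈ J, E k ∘L P k = 0
  invariance : ∀ m ∈ J, ∀ k ∈ J, m ≤ k → Phi A k m ∘L E m = E k ∘L Phi A k m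
  norm_le : ∀ k ∈ J, ‖E k‖ ≤ C

namespace IsDichotomyCorrection

variable {n : ℕ} {A P E : ℤ → (Euc n →L[ℝ] Euc n)} {J : Set ℤ} {C K α : ℝ}

theorem proj_apply (hE : IsDichotomyCorrection A P E J C) {k : ℤ} (hk : k ∈ J) (x : Euc n) :
    P k (E k x) = E k x :=
  DFunLike.congr_fun (hE.proj_comp k hk) x

theorem apply_proj (hE : IsDichotomyCorrection A P E J C) {k : ℤ} (hk : k ∈ J) (x : Euc n) :
    E k (P k x) = 0 :=
  DFunLike.congr_fun (hE.comp_proj k hk) x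

theorem apply_apply (hE : IsDichotomyCorrection A P E J C) {k : ℤ} (hk : k ∈ J) (x : Euc n) :
    E k (E k x) = 0 := by
  rw [← hE.proj_apply hk x, hE.apply_proj hk]

theorem invariance_apply (hE : IsDichotomyCorrection A P E J C) {m k : ℤ} (hm : m ∈ J)
    (hk : k ∈ J) (hmk : m ≤ k) (x : Euc n) : Phi A k m (E m x) = E k (Phi A k m x) :=
  DFunLike.congr_fun (hE.invariance m hm k hk hmk) x

theorem range_add (hP : ExpDichotomyOn A J P K α) (hE : IsDichotomyCorrection A P E J C)
    {k : ℤ} (hk : k ∈ J) :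
    LinearMap.range ((P k + E k : Euc n →L[ℝ] Euc n) : Euc n →ₗ[ℝ] Euc n) =
      LinearMap.range (P k : Euc n →ₗ[ℝ] Euc n) := by
  apply le_antisymm
  · rintro _ ⟨y, rfl⟩
    exact ⟨P k y + E k y, by simp [hP.proj_apply hk, hE.proj_apply hk]⟩
  · rintro _ ⟨y, rfl⟩
    exact ⟨P k y, by simp [hP.proj_apply hk, hE.apply_proj hk]⟩

theorem backward_add (hP : ExpDichotomyOn A J P K α) (hE : IsDichotomyCorrection A P E J C) :
    ∃ Ψ : ℤ → ℤ → (Euc n →L[ℝ] Euc n), ∀ m ∈ J, ∀ k ∈ J, m ≤ k →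
      (∀ x ∈ LinearMap.ker ((P m + E m : Euc n →L[ℝ] Euc n) : Euc n →ₗ[ℝ] Euc n),
        Ψ m k (Phi A k m x) = x) ∧
      (∀ x ∈ LinearMap.ker ((P k + E k : Euc n →L[ℝ] Euc n) : Euc n →ₗ[ℝ] Euc n),
        Ψ m k x ∈ LinearMap.ker ((P m + E m : Euc n →L[ℝ] Euc n) : Euc n →ₗ[ℝ] Euc n) ∧
          Phi A k m (Ψ m k x) = x) ∧
      ‖Ψ m k ∘L (1 - (P k + E k))‖ ≤ (1 + C) * (K * Real.exp (-α * ((k : ℝ) - m))) := by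
  obtain ⟨Ψ, hΨ⟩ := hP.backward
  refine ⟨fun m k => (1 - E m) ∘L Ψ m k ∘L (1 - P k), fun m hm k hk hmk => ?_⟩
  obtain ⟨hleft, hright, hnorm⟩ := hΨ m hm k hk hmk
  refine ⟨fun x hx => ?_, fun x hx => ?_, ?_⟩
  · replace hx : P m x + E m x = 0 := hx
    simp only [ContinuousLinearMap.comp_apply, ← hP.invariance_one_sub_apply hm hk hmk,
      hleft _ (hP.one_sub_apply_mem_ker hm x)]
    simp [hE.apply_proj hm, ← hx]
  · replace hx : P k x + E k x = 0 := hx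
    set y := Ψ m k ((1 - P k) x)
    obtain ⟨hy, hΦy⟩ := hright _ (hP.one_sub_apply_mem_ker hk x)
    replace hy : P m y = 0 := hy
    have hΨx : ((1 - E m) ∘L Ψ m k ∘L (1 - P k)) x = y - E m y := rfl
    rw [hΨx]
    refine ⟨?_, ?_⟩
    · change (P m + E m) (y - E m y) = 0
      simp [hy, hE.proj_apply hm, hE.apply_apply hm]
    · rw [map_sub, hE.invariance_apply hm hk hmk, hΦy]
      simp [hE.apply_proj hk, ← hx]
  · have hcomp : ((1 - E m) ∘L Ψ m k ∘L (1 - P k)) ∘L (1 - (P k + E k)) =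
        (1 - E m) ∘L Ψ m k ∘L (1 - P k) := by
      ext x : 1
      simp [hP.proj_apply hk, hE.proj_apply hk]
    have h1E : ‖1 - E m‖ ≤ 1 + C :=
      (norm_sub_le _ _).trans (add_le_add ContinuousLinearMap.norm_id_le (hE.norm_le m hm))
    rw [hcomp]
    exact (ContinuousLinearMap.opNorm_comp_le _ _).trans
      (mul_le_mul h1E hnorm (norm_nonneg _) ((norm_nonneg _).trans h1E))

theorem expDichotomyOn_add (hP : ExpDichotomyOn A J P K α) (hE : IsDichotomyCorrection A P E J C)
    (hC : 0 ≤ C) : ExpDichotomyOn A J (fun k => P k + E k) (K * (1 + K + C)) α := by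
  have hK := hP.K_nonneg
  obtain ⟨Ψ, hΨ⟩ := hE.backward_add hP
  have hinv : ∀ m ∈ J, ∀ k ∈ J, m ≤ k →
      Phi A k m ∘L (P m + E m) = (P k + E k) ∘L Phi A k m := fun m hm k hk hmk => by
    ext x : 1
    simp [hP.invariance_apply hm hk hmk, hE.invariance_apply hm hk hmk]
  refine ⟨?_, hP.alpha_pos, fun k hk => ?_, fun k hk m hm => ?_, hinv, fun m hm k hk hmk => ?_,
    fun k hk hk1 => ?_, ⟨Ψ, fun m hm k hk hmk => ?_⟩⟩
  · nlinarith [hP.one_le_K]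
  · ext x : 1
    simp [hP.proj_apply hk, hE.proj_apply hk, hE.apply_proj hk, hE.apply_apply hk]
  · rw [hE.range_add hP hk, hE.range_add hP hm]
    exact hP.rank_const k hk m hm
  · have hfactor : Phi A k m ∘L (P m + E m) = (Phi A k m ∘L P m) ∘L (P m + E m) := by
      ext x : 1
      simp [hP.proj_apply hm, hE.proj_apply hm]
    have hnormQ : ‖P m + E m‖ ≤ K + C :=
      (norm_add_le _ _).trans (add_le_add (hP.norm_proj_le hm) (hE.norm_le m hm))
    rw [hfactor]
    calc ‖(Phi A k m ∘L P m) ∘L (P m + E m)‖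
        ≤ K * Real.exp (-α * ((k : ℝ) - m)) * (K + C) :=
          (ContinuousLinearMap.opNorm_comp_le _ _).trans
            (mul_le_mul (hP.forward m hm k hk hmk) hnormQ (norm_nonneg _) (by positivity))
      _ ≤ K * (1 + K + C) * Real.exp (-α * ((k : ℝ) - m)) := by
          nlinarith [Real.exp_pos (-α * ((k : ℝ) - m))]
  · have hstep : k ≤ k + 1 := Int.le_add_one le_rfl
    obtain ⟨hleft, hright, -⟩ := hΨ k hk (k + 1) hk1 hstep
    rw [Phi_succ_self] at hleft hright
    refine Set.InvOn.bijOn ⟨fun x hx => hleft x hx, fun y hy => (hright y hy).2⟩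
      (fun x hx => ?_) (fun y hy => (hright y hy).1)
    have hx' := DFunLike.congr_fun (hinv k hk (k + 1) hk1 hstep) x
    rw [Phi_succ_self] at hx'
    change (P (k + 1) + E (k + 1)) (A k x) = 0
    rw [← ContinuousLinearMap.comp_apply, ← hx']
    exact (A k).map_zero ▸ congrArg (A k) hx
  · obtain ⟨hleft, hright, hnorm⟩ := hΨ m hm k hk hmk
    refine ⟨hleft, hright, hnorm.trans ?_⟩
    nlinarith [mul_nonneg (mul_nonneg hK hK) (Real.exp_pos (-α * ((k : ℝ) - m))).le]

end IsDichotomyCorrection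

namespace ExpDichotomyOn

variable {n : ℕ} {A P : ℤ → (Euc n →L[ℝ] Euc n)} {K α : ℝ}

/-- The witness is `E k = Φ(k,a) D Φ(a,k) (1 - P k)`, with `Φ(a,k)` the inverse of `Φ(k,a)` between
the unstable subspaces. -/
theorem exists_isDichotomyCorrection {a : ℤ} (h : ExpDichotomyOn A (Set.Ici a) P K α)
    (D : Euc n →L[ℝ] Euc n) (hPD : P a ∘L D = D) (hDP : D ∘L P a = 0) :
    ∃ E : ℤ → (Euc n →L[ℝ] Euc n),
      E a = D ∧ IsDichotomyCorrection A P E (Set.Ici a) (K * ‖D‖ * K) := by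
  obtain ⟨Ψ, hΨ⟩ := h.backward
  have ha : a ∈ Set.Ici a := Set.self_mem_Ici
  have hPDx : ∀ x, P a (D x) = D x := DFunLike.congr_fun hPD
  have hDPx : ∀ x, D (P a x) = 0 := DFunLike.congr_fun hDP
  refine ⟨fun k => Phi A k a ∘L D ∘L Ψ a k ∘L (1 - P k), ?_,
    ⟨fun k hk => ?_, fun k hk => ?_, fun m hm k hk hmk => ?_, fun k hk => ?_⟩⟩
  · have hΨa : ∀ x, Ψ a a ((1 - P a) x) = (1 - P a) x := fun x => by
      simpa [Phi_self] using (hΨ a ha a ha le_rfl).1 _ (h.one_sub_apply_mem_ker ha x)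
    ext x : 1
    change Phi A a a (D (Ψ a a ((1 - P a) x))) = D x
    rw [hΨa, Phi_self]
    simp [hDPx]
  · ext x : 1
    simp [← h.invariance_apply ha hk hk, hPDx]
  · ext x : 1
    simp [h.proj_apply hk]
  · ext x : 1
    obtain ⟨hv, hΦv⟩ := (hΨ a ha m hm hm).2.1 _ (h.one_sub_apply_mem_ker hm x)
    have hpull : Ψ a k ((1 - P k) (Phi A k m x)) = Ψ a m ((1 - P m) x) :=
      calc Ψ a k ((1 - P k) (Phi A k m x))
          = Ψ a k (Phi A k a (Ψ a m ((1 - P m) x))) := by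
            rw [← h.invariance_one_sub_apply hm hk hmk, ← Phi_comp_apply A hm hmk, hΦv]
        _ = Ψ a m ((1 - P m) x) := (hΨ a ha k hk (hm.trans hmk)).1 _ hv
    simp only [ContinuousLinearMap.comp_apply, hpull, Phi_comp_apply A hm hmk]
  · have hfactor : Phi A k a ∘L D ∘L Ψ a k ∘L (1 - P k) =
        (Phi A k a ∘L P a) ∘L D ∘L (Ψ a k ∘L (1 - P k)) := by
      ext x : 1
      simp [hPDx]
    have hΨk : ‖Ψ a k ∘L (1 - P k)‖ ≤ K :=
      (hΨ a ha k hk hk).2.2.trans <|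
        mul_le_of_le_one_right h.K_nonneg (exp_neg_mul_sub_le_one h.alpha_pos.le hk)
    simp only [hfactor]
    calc ‖(Phi A k a ∘L P a) ∘L D ∘L (Ψ a k ∘L (1 - P k))‖
        ≤ ‖Phi A k a ∘L P a‖ * (‖D‖ * ‖Ψ a k ∘L (1 - P k)‖) :=
          (ContinuousLinearMap.opNorm_comp_le _ _).trans <|
            mul_le_mul_of_nonneg_left (ContinuousLinearMap.opNorm_comp_le _ _) (norm_nonneg _)
      _ ≤ K * (‖D‖ * K) := by
          gcongr
          · exact h.K_nonneg
          · exact h.norm_forward_le ha hk hk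
      _ = K * ‖D‖ * K := by ring

theorem exists_ker_eq_of_isCompl {a : ℤ} (h : ExpDichotomyOn A (Set.Ici a) P K α)
    {W : Submodule ℝ (Euc n)} (hW : IsCompl W (LinearMap.range (P a : Euc n →ₗ[ℝ] Euc n))) :
    ∃ Q : ℤ → (Euc n →L[ℝ] Euc n),
      LinearMap.ker (Q a : Euc n →ₗ[ℝ] Euc n) = W ∧
      (∃ K' α' : ℝ, ExpDichotomyOn A (Set.Ici a) Q K' α') ∧
      ∀ k, a ≤ k → LinearMap.range (Q k : Euc n →ₗ[ℝ] Euc n) =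
        LinearMap.range (P k : Euc n →ₗ[ℝ] Euc n) := by
  have ha : a ∈ Set.Ici a := Set.self_mem_Ici
  set R := LinearMap.range (P a : Euc n →ₗ[ℝ] Euc n)
  let Q₀ : Euc n →L[ℝ] Euc n := LinearMap.toContinuousLinearMap (R.projection W hW.symm)
  have hPQ₀ : P a ∘L Q₀ = Q₀ := by
    ext x : 1
    obtain ⟨y, hy⟩ : Q₀ x ∈ R := R.projection_apply_mem hW.symm x
    simp only [ContinuousLinearMap.comp_apply, ← hy, ContinuousLinearMap.coe_coe,
      h.proj_apply ha]
  have hQ₀P : Q₀ ∘L P a = P a := by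
    ext x : 1
    exact R.projection_apply_of_mem_left hW.symm (LinearMap.mem_range_self _ x)
  obtain ⟨E, hEa, hE⟩ := h.exists_isDichotomyCorrection (Q₀ - P a)
    (by rw [ContinuousLinearMap.comp_sub, hPQ₀, h.proj a ha])
    (by rw [ContinuousLinearMap.sub_comp, hQ₀P, h.proj a ha, sub_self])
  refine ⟨fun k => P k + E k, ?_,
    ⟨_, _, hE.expDichotomyOn_add h (by have := h.K_nonneg; positivity)⟩,
    fun k hk => hE.range_add h hk⟩
  change LinearMap.ker ((P a + E a : Euc n →L[ℝ] Euc n) : Euc n →ₗ[ℝ] Euc n) = W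
  rw [hEa, add_sub_cancel, LinearMap.coe_toContinuousLinearMap, Submodule.ker_projection]

end ExpDichotomyOn

/-- for an exponential dichotomy on `ℤ₊` with projection `P`:
(a) the stable subspace `R(P(0))` is uniquely determined;
(b) for every complement `W` of `R(P(0))` there is a unique invariant projection family
`Q` with `N(Q(0)) = W` with respect to which the equation has an exponential dichotomy
on `ℤ₊`; moreover `R(Q(k)) = R(P(k))` for all `k ≥ 0`. -/
theorem statement4 {n : ℕ} (A P : ℤ → (Euc n →L[ℝ] Euc n)) (K α : ℝ)
    (hED : ExpDichotomyOn A {k : ℤ | 0 ≤ k} P K α) :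
    (∀ (Q : ℤ → (Euc n →L[ℝ] Euc n)) (K' α' : ℝ),
        ExpDichotomyOn A {k : ℤ | 0 ≤ k} Q K' α' →
        LinearMap.range (Q 0 : Euc n →ₗ[ℝ] Euc n) = LinearMap.range (P 0 : Euc n →ₗ[ℝ] Euc n)) ∧
    (∀ W : Submodule ℝ (Euc n), IsCompl W (LinearMap.range (P 0 : Euc n →ₗ[ℝ] Euc n)) →
      (∃ Q : ℤ → (Euc n →L[ℝ] Euc n),
        (∀ k : ℤ, 0 ≤ k → Q (k + 1) ∘L A k = A k ∘L Q k) ∧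
        LinearMap.ker (Q 0 : Euc n →ₗ[ℝ] Euc n) = W ∧
        (∃ K' α' : ℝ, ExpDichotomyOn A {k : ℤ | 0 ≤ k} Q K' α') ∧
        (∀ k : ℤ, 0 ≤ k → LinearMap.range (Q k : Euc n →ₗ[ℝ] Euc n) = LinearMap.range (P k : Euc n →ₗ[ℝ] Euc n))) ∧
      (∀ Q Q' : ℤ → (Euc n →L[ℝ] Euc n),
        ((∀ k : ℤ, 0 ≤ k → Q (k + 1) ∘L A k = A k ∘L Q k) ∧ LinearMap.ker (Q 0 : Euc n →ₗ[ℝ] Euc n) = W ∧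
          ∃ K' α' : ℝ, ExpDichotomyOn A {k : ℤ | 0 ≤ k} Q K' α') →
        ((∀ k : ℤ, 0 ≤ k → Q' (k + 1) ∘L A k = A k ∘L Q' k) ∧ LinearMap.ker (Q' 0 : Euc n →ₗ[ℝ] Euc n) = W ∧
          ∃ K' α' : ℝ, ExpDichotomyOn A {k : ℤ | 0 ≤ k} Q' K' α') →
        ∀ k : ℤ, 0 ≤ k → Q k = Q' k)) := by
  refine ⟨fun Q K' α' hQ => hQ.range_eq hED fun _ hk => hk, fun W hW => ⟨?_, ?_⟩⟩
  · obtain ⟨Q, hker, ⟨K', α', hQ⟩, hrange⟩ := ExpDichotomyOn.exists_ker_eq_of_isCompl hED hW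
    exact ⟨Q, fun k hk => hQ.proj_succ_comp hk (Int.le_add_one hk), hker, ⟨K', α', hQ⟩, hrange⟩
  · rintro Q Q' ⟨-, hker, K₁, α₁, hQ⟩ ⟨-, hker', K₂, α₂, hQ'⟩ k hk
    exact ExpDichotomyOn.eq_of_ker_eq hQ hQ' (hker.trans hker'.symm) hk
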